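/- Fix Δ^{ij} ∈ F⊗F for 0 ≤ i,j ≤ 1, each symmetric weak Frobenius; set S := Δ^{10} − Δ^{01} and β := Δ^{00} + Δ^{10}x₁ + Δ^{01}x₂ + Δ^{11}x₁x₂ ∈ (F⊗F)[x₁,x₂], and let ρ := ∂^β be the β-twisted Demazure operator. Then for every a ∈ (F⊗F)[x₁,x₂]: (i) ρ(σ(a)) + σ(ρ(a)) = S·σ(a) − a·S; and (ii) ρ(ρ(a)) = S·ρ(a). -/

import Mathlib

/-!
For `β = Δ⁰⁰ + Δ¹⁰x₁ + Δ⁰¹x₂ + Δ¹¹x₁x₂` with symmetric weak Frobenius coefficients and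
`S = Δ¹⁰ − Δ⁰¹`, the twisted Demazure operator `ρ = ∂^β` satisfies
`ρσ + σρ = l_S σ − r_S σ²` and `ρ² = l_S ρ`.  The polynomial ring `(F⊗F)[x₁,x₂]`
is modelled as `(F ⊗[k] F) ⊗[k] k[x₁,x₂]`.
-/

open scoped TensorProduct
open MvPolynomial

variable (k F : Type*)

/-- Weak Frobenius elements of `F ⊗ F`: `(a⊗b)·Δ = Δ·(b⊗a)` for all `a, b ∈ F`. -/
def IsWeakFrobenius [CommSemiring k] [Ring F] [Algebra k F] (Δ : F ⊗[k] F) : Prop :=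
  ∀ a b : F, (a ⊗ₜ[k] b) * Δ = Δ * (b ⊗ₜ[k] a)

/-- Symmetric elements of `F ⊗ F`: fixed by the flip. -/
def IsSymmEl [CommSemiring k] [Ring F] [Algebra k F] (Δ : F ⊗[k] F) : Prop :=
  (Algebra.TensorProduct.comm k F F) Δ = Δ

/-- The polynomial ring `(F⊗F)[x₁,x₂]`, modelled as `(F⊗F) ⊗ 𝕜[x₁,x₂]`. -/
abbrev PolyFF (k F : Type*) [CommSemiring k] [Ring F] [Algebra k F] :=
  (F ⊗[k] F) ⊗[k] MvPolynomial (Fin 2) k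

/-- The automorphism `σ` of `(F⊗F)[x₁,x₂]` flipping the two tensor factors
and interchanging `x₁` and `x₂`. -/
noncomputable def sigmaP [CommSemiring k] [Ring F] [Algebra k F] :
    PolyFF k F ≃ₐ[k] PolyFF k F :=
  Algebra.TensorProduct.congr (Algebra.TensorProduct.comm k F F)
    (MvPolynomial.renameEquiv k (Equiv.swap (0 : Fin 2) 1))

/-- The element `x₁ - x₂` of `(F⊗F)[x₁,x₂]`. -/
noncomputable def xdiff [CommRing k] [Ring F] [Algebra k F] : PolyFF k F :=
  (1 : F ⊗[k] F) ⊗ₜ[k]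
    ((X (0 : Fin 2) : MvPolynomial (Fin 2) k) - (X (1 : Fin 2) : MvPolynomial (Fin 2) k))


section Aux

variable [Field k] [Ring F] [Algebra k F]

lemma sigmaP_tmul (c : F ⊗[k] F) (q : MvPolynomial (Fin 2) k) :
    sigmaP k F (c ⊗ₜ[k] q) =
      (Algebra.TensorProduct.comm k F F c) ⊗ₜ[k] (rename (Equiv.swap (0:Fin 2) 1) q) := by
  simp [sigmaP]

lemma comm_comm_apply (c : F ⊗[k] F) :
    Algebra.TensorProduct.comm k F F (Algebra.TensorProduct.comm k F F c) = c := by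
  induction c using TensorProduct.induction_on with
  | zero => simp
  | tmul a b => simp
  | add x y hx hy => simp [hx, hy]

lemma sigmaP_invol (a : PolyFF k F) : sigmaP k F (sigmaP k F a) = a := by
  induction a using TensorProduct.induction_on with
  | zero => rw [map_zero, map_zero]
  | tmul c q =>
    rw [sigmaP_tmul, sigmaP_tmul, comm_comm_apply, rename_rename,
      show ((Equiv.swap (0:Fin 2) 1) : Fin 2 → Fin 2) ∘ (Equiv.swap (0:Fin 2) 1) = id from
        funext fun x => Equiv.swap_apply_self _ _ x, rename_id, AlgHom.id_apply]
  | add x y hx hy => simp [map_add, hx, hy]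

lemma sigmaP_xdiff : sigmaP k F (xdiff k F) = - xdiff k F := by
  rw [xdiff, sigmaP_tmul]
  simp [TensorProduct.tmul_sub, TensorProduct.sub_tmul]

lemma one_tmul_comm (p : MvPolynomial (Fin 2) k) (a : PolyFF k F) :
    ((1 : F ⊗[k] F) ⊗ₜ[k] p) * a = a * ((1 : F ⊗[k] F) ⊗ₜ[k] p) := by
  induction a using TensorProduct.induction_on with
  | zero => simp
  | tmul c q => simp [Algebra.TensorProduct.tmul_mul_tmul, mul_comm]
  | add x y hx hy => simp [mul_add, add_mul, hx, hy]

lemma xdiff_comm (a : PolyFF k F) : xdiff k F * a = a * xdiff k F :=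
  one_tmul_comm k F _ a

lemma xdiff_cancel {u v : PolyFF k F} (h : xdiff k F * u = xdiff k F * v) : u = v := by
  have hne : (X (0:Fin 2) : MvPolynomial (Fin 2) k) - X 1 ≠ 0 := by
    intro h0
    have := MvPolynomial.X_injective (sub_eq_zero.mp h0)
    exact absurd this (by decide)
  have hinj : Function.Injective
      (LinearMap.mulLeft k ((X (0:Fin 2) : MvPolynomial (Fin 2) k) - X 1)) :=
    fun p q hpq => mul_left_cancel₀ hne hpq
  have key : ∀ w : PolyFF k F,
      xdiff k F * w = (LinearMap.lTensor (F ⊗[k] F)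
        (LinearMap.mulLeft k ((X (0:Fin 2) : MvPolynomial (Fin 2) k) - X 1))) w := by
    intro w
    induction w using TensorProduct.induction_on with
    | zero => simp
    | tmul c q => simp [xdiff, Algebra.TensorProduct.tmul_mul_tmul]
    | add x y hx hy => simp [mul_add, hx, hy]
  rw [key, key] at h
  exact Module.Flat.lTensor_preserves_injective_linearMap _ hinj h

/-- Flip on the `F ⊗ F` factor only. -/
noncomputable def tauP : PolyFF k F ≃ₐ[k] PolyFF k F :=
  Algebra.TensorProduct.congr (Algebra.TensorProduct.comm k F F) AlgEquiv.refl

lemma tauP_tmul (c : F ⊗[k] F) (q : MvPolynomial (Fin 2) k) :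
    tauP k F (c ⊗ₜ[k] q) = (Algebra.TensorProduct.comm k F F c) ⊗ₜ[k] q := by
  simp [tauP]

lemma tauP_invol (a : PolyFF k F) : tauP k F (tauP k F a) = a := by
  induction a using TensorProduct.induction_on with
  | zero => rw [map_zero, map_zero]
  | tmul c q => rw [tauP_tmul, tauP_tmul, comm_comm_apply]
  | add x y hx hy => simp [map_add, hx, hy]

lemma wf_ext (Δ : F ⊗[k] F) (h : IsWeakFrobenius k F Δ) (c : F ⊗[k] F) :
    c * Δ = Δ * (Algebra.TensorProduct.comm k F F c) := by
  induction c using TensorProduct.induction_on with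
  | zero => simp
  | tmul a b => simpa using h a b
  | add x y hx hy => rw [add_mul, hx, hy, map_add, mul_add]

lemma wfp_tmul (Δ : F ⊗[k] F) (h : IsWeakFrobenius k F Δ) (m : MvPolynomial (Fin 2) k)
    (a : PolyFF k F) : a * (Δ ⊗ₜ[k] m) = (Δ ⊗ₜ[k] m) * tauP k F a := by
  induction a using TensorProduct.induction_on with
  | zero => simp
  | tmul c q =>
    rw [tauP_tmul, Algebra.TensorProduct.tmul_mul_tmul, Algebra.TensorProduct.tmul_mul_tmul,
      wf_ext k F Δ h c, mul_comm q m]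
  | add x y hx hy => rw [add_mul, hx, hy, map_add, mul_add]

end Aux

set_option maxHeartbeats 1600000 in
theorem stmt13 [Field k] [Ring F] [Algebra k F] [FiniteDimensional k F]
    (Δ00 Δ10 Δ01 Δ11 : F ⊗[k] F)
    (hwf00 : IsWeakFrobenius k F Δ00) (hsym00 : IsSymmEl k F Δ00)
    (hwf10 : IsWeakFrobenius k F Δ10) (hsym10 : IsSymmEl k F Δ10)
    (hwf01 : IsWeakFrobenius k F Δ01) (hsym01 : IsSymmEl k F Δ01)
    (hwf11 : IsWeakFrobenius k F Δ11) (hsym11 : IsSymmEl k F Δ11)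
    -- `β = Δ⁰⁰ + Δ¹⁰x₁ + Δ⁰¹x₂ + Δ¹¹x₁x₂` and `S = Δ¹⁰ − Δ⁰¹`
    (β : PolyFF k F)
    (hβ : β = Δ00 ⊗ₜ[k] (1 : MvPolynomial (Fin 2) k)
        + Δ10 ⊗ₜ[k] (X (0 : Fin 2) : MvPolynomial (Fin 2) k)
        + Δ01 ⊗ₜ[k] (X (1 : Fin 2) : MvPolynomial (Fin 2) k)
        + Δ11 ⊗ₜ[k] ((X (0 : Fin 2) : MvPolynomial (Fin 2) k) * X 1))
    (Sel : F ⊗[k] F) (hS : Sel = Δ10 - Δ01)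
    -- `D = ρ = ∂^β` is the β-twisted Demazure operator
    (D : PolyFF k F →ₗ[k] PolyFF k F)
    (hD : ∀ a : PolyFF k F, xdiff k F * D a = β * a - (sigmaP k F) a * β) :
    -- (i) `ρ(σ(a)) + σ(ρ(a)) = S·σ(a) − a·S`
    (∀ a : PolyFF k F,
      D ((sigmaP k F) a) + (sigmaP k F) (D a) =
        (Sel ⊗ₜ[k] (1 : MvPolynomial (Fin 2) k)) * (sigmaP k F) a
          - a * (Sel ⊗ₜ[k] (1 : MvPolynomial (Fin 2) k))) ∧
    -- (ii) `ρ(ρ(a)) = S·ρ(a)`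
    (∀ a : PolyFF k F,
      D (D a) = (Sel ⊗ₜ[k] (1 : MvPolynomial (Fin 2) k)) * D a) := by
  have hsym00' : (Algebra.TensorProduct.comm k F F) Δ00 = Δ00 := hsym00
  have hsym10' : (Algebra.TensorProduct.comm k F F) Δ10 = Δ10 := hsym10
  have hsym01' : (Algebra.TensorProduct.comm k F F) Δ01 = Δ01 := hsym01
  have hsym11' : (Algebra.TensorProduct.comm k F F) Δ11 = Δ11 := hsym11
  set Sp : PolyFF k F := Sel ⊗ₜ[k] (1 : MvPolynomial (Fin 2) k) with hSp
  have hσβ : sigmaP k F β =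
      Δ00 ⊗ₜ[k] (1 : MvPolynomial (Fin 2) k) + Δ10 ⊗ₜ[k] (X (1 : Fin 2) : MvPolynomial (Fin 2) k)
      + Δ01 ⊗ₜ[k] (X (0 : Fin 2) : MvPolynomial (Fin 2) k)
      + Δ11 ⊗ₜ[k] ((X (0 : Fin 2) : MvPolynomial (Fin 2) k) * X 1) := by
    rw [hβ, map_add, map_add, map_add, sigmaP_tmul, sigmaP_tmul, sigmaP_tmul, sigmaP_tmul,
      hsym00', hsym10', hsym01', hsym11']
    simp [rename_X, Equiv.swap_apply_left, Equiv.swap_apply_right, mul_comm]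
  have hdiff : Sp * xdiff k F = β - sigmaP k F β := by
    rw [hSp, hσβ, hβ, hS, xdiff, Algebra.TensorProduct.tmul_mul_tmul]
    simp only [TensorProduct.sub_tmul, TensorProduct.tmul_sub, one_mul, mul_one]
    abel
  have hwfβ : ∀ w : PolyFF k F, w * β = β * tauP k F w := by
    intro w
    rw [hβ, mul_add, mul_add, mul_add, add_mul, add_mul, add_mul,
      wfp_tmul k F _ hwf00 _ w, wfp_tmul k F _ hwf10 _ w,
      wfp_tmul k F _ hwf01 _ w, wfp_tmul k F _ hwf11 _ w]
  have hwfσβ : ∀ w : PolyFF k F, w * sigmaP k F β = sigmaP k F β * tauP k F w := by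
    intro w
    rw [hσβ, mul_add, mul_add, mul_add, add_mul, add_mul, add_mul,
      wfp_tmul k F _ hwf00 _ w, wfp_tmul k F _ hwf10 _ w,
      wfp_tmul k F _ hwf01 _ w, wfp_tmul k F _ hwf11 _ w]
  have central : ∀ w : PolyFF k F,
      w * (sigmaP k F β * β) = sigmaP k F β * β * w := by
    intro w
    rw [← mul_assoc, hwfσβ w, mul_assoc, hwfβ (tauP k F w), tauP_invol, ← mul_assoc]
  have hσD : ∀ a : PolyFF k F, xdiff k F * sigmaP k F (D a)
      = a * sigmaP k F β - sigmaP k F β * sigmaP k F a := by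
    intro a
    have h := congrArg (sigmaP k F) (hD a)
    rw [map_mul, map_sub, map_mul, map_mul, sigmaP_invol, sigmaP_xdiff] at h
    have h4 := (neg_mul (xdiff k F) (sigmaP k F (D a))).symm.trans h
    have h5 := neg_eq_iff_eq_neg.mp h4
    rwa [neg_sub] at h5
  have hx1 : ∀ w : PolyFF k F, xdiff k F * (Sp * w) = (β - sigmaP k F β) * w := by
    intro w
    rw [← mul_assoc, xdiff_comm k F Sp, hdiff]
  have hx2 : ∀ w : PolyFF k F, xdiff k F * (w * Sp) = w * (β - sigmaP k F β) := by
    intro w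
    rw [← mul_assoc, xdiff_comm k F w, mul_assoc, xdiff_comm k F Sp, hdiff]
  refine ⟨fun a => ?_, fun a => ?_⟩
  · apply xdiff_cancel k F
    rw [mul_add, mul_sub, hx1 (sigmaP k F a), hx2 a, hD (sigmaP k F a), sigmaP_invol, hσD a]
    simp only [mul_sub, sub_mul, mul_add, add_mul, mul_assoc]
    abel
  · apply xdiff_cancel k F
    apply xdiff_cancel k F
    have lhs : xdiff k F * (xdiff k F * D (D a)) =
        β * (β * a - sigmaP k F a * β)
          - (a * sigmaP k F β - sigmaP k F β * sigmaP k F a) * β := by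
      rw [hD (D a), mul_sub,
        show xdiff k F * (β * D a) = β * (xdiff k F * D a) from by
          rw [← mul_assoc, xdiff_comm k F β, mul_assoc],
        ← mul_assoc (xdiff k F) (sigmaP k F (D a)) β, hD a, hσD a]
    have rhs : xdiff k F * (xdiff k F * (Sp * D a)) =
        (β - sigmaP k F β) * (β * a - sigmaP k F a * β) := by
      rw [hx1 (D a),
        show xdiff k F * ((β - sigmaP k F β) * D a)
            = (β - sigmaP k F β) * (xdiff k F * D a) from by
          rw [← mul_assoc, xdiff_comm k F (β - sigmaP k F β), mul_assoc],
        hD a]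
    rw [lhs, rhs]
    have expand : β * (β * a - sigmaP k F a * β)
        - (a * sigmaP k F β - sigmaP k F β * sigmaP k F a) * β
        - (β - sigmaP k F β) * (β * a - sigmaP k F a * β)
        = sigmaP k F β * β * a - a * (sigmaP k F β * β) := by
      simp only [mul_sub, sub_mul, mul_add, add_mul, mul_assoc]
      abel
    have hz : β * (β * a - sigmaP k F a * β)
        - (a * sigmaP k F β - sigmaP k F β * sigmaP k F a) * β
        - (β - sigmaP k F β) * (β * a - sigmaP k F a * β) = 0 := by
      rw [expand, central a, sub_self]
    exact sub_eq_zero.mp hz
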